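/- For every complex number Z with Im Z = γ, the matrix M(Z) is Hermitian and satisfies the intertwining relation M(Z) H = H† M(Z), where H† denotes the conjugate transpose of H. -/

import Mathlib

open Matrix Complex

/-- The `2m × 2m` tridiagonal Hamiltonian with diagonal entries `z 1, …, z n`
(1-based) and symmetric off-diagonal entries `t 1, …, t (n-1)`. -/
noncomputable def Hop (m : ℕ) (t : ℕ → ℝ) (z : ℕ → ℂ) :
    Matrix (Fin (2*m)) (Fin (2*m)) ℂ :=
  fun i j =>
    if (i : ℕ) = (j : ℕ) then z ((i : ℕ) + 1)
    else if (i : ℕ) + 1 = (j : ℕ) then ((t ((i : ℕ) + 1) : ℝ) : ℂ)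
    else if (j : ℕ) + 1 = (i : ℕ) then ((t ((j : ℕ) + 1) : ℝ) : ℂ)
    else 0

/-- The block matrix `M(Z) = [[1, (conj Z / t_m) P_m],[(Z / t_m) P_m, 1]]`. -/
noncomputable def Mop (m : ℕ) (t : ℕ → ℝ) (Z : ℂ) :
    Matrix (Fin (2*m)) (Fin (2*m)) ℂ :=
  fun i j =>
    if i = j then 1
    else if (i : ℕ) + (j : ℕ) + 1 = 2*m then
      (if (i : ℕ) < m then (starRingEnd ℂ) Z / (t m : ℂ) else Z / (t m : ℂ))
    else 0

/-!
Let `R` be the reversal matrix and `D` the diagonal matrix with entries `conj Z / t_m` on the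
first half and `Z / t_m` on the second, so that `M(Z) = 1 + D R`. The reflection symmetry of `t`
and `z` makes `H` persymmetric up to conjugation, `R H = Hᴴ R`, which reduces `M H = Hᴴ M` to
`(D Hᴴ - Hᴴ D) R = Hᴴ - H`. As `D` is constant on each half and `H` is tridiagonal, the commutator
lives on the central bond only, and after reversal it is diagonal with entries `∓ 2 i Im Z` on
sites `m, m + 1`. Because the `z_j` are real away from the centre and `z_{m+1} = conj z_m`,
`Hᴴ - H` is the same diagonal matrix with `Im z_m` in place of `Im Z`.
-/

theorem one_add_mul_mul_eq_mul_one_add_mul {α : Type*} [Ring α] {A B D R : α}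
    (hR : R * A = B * R) (hD : (D * B - B * D) * R = B - A) :
    (1 + D * R) * A = B * (1 + D * R) := by
  rw [sub_mul] at hD
  rw [add_mul, mul_add, one_mul, mul_one, mul_assoc, hR, ← mul_assoc, ← mul_assoc, add_comm]
  exact sub_eq_sub_iff_add_eq_add.mp hD

namespace Matrix

theorem diagonal_mul_sub_mul_diagonal_apply {ι R : Type*} [Fintype ι] [DecidableEq ι]
    [CommRing R] (d : ι → R) (A : Matrix ι ι R) (i j : ι) :
    (diagonal d * A - A * diagonal d) i j = (d i - d j) * A i j := by
  rw [sub_apply, diagonal_mul, mul_diagonal, sub_mul, mul_comm (A i j)]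

variable {n : ℕ} {R : Type*} [NonAssocSemiring R]

theorem permMatrix_revPerm_mul (A : Matrix (Fin n) (Fin n) R) :
    Fin.revPerm.permMatrix R * A = A.submatrix Fin.rev id :=
  PEquiv.toMatrix_toPEquiv_mul _ _

theorem mul_permMatrix_revPerm (A : Matrix (Fin n) (Fin n) R) :
    A * Fin.revPerm.permMatrix R = A.submatrix id Fin.rev :=
  PEquiv.mul_toMatrix_toPEquiv _ _

end Matrix

noncomputable def mopCoeff (m : ℕ) (t : ℕ → ℝ) (Z : ℂ) (i : Fin (2*m)) : ℂ :=
  if (i : ℕ) < m then (starRingEnd ℂ) Z / (t m : ℂ) else Z / (t m : ℂ)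

theorem Mop_eq_one_add (m : ℕ) (t : ℕ → ℝ) (Z : ℂ) :
    Mop m t Z = 1 + diagonal (mopCoeff m t Z) * Fin.revPerm.permMatrix ℂ := by
  rw [mul_permMatrix_revPerm]
  ext i j
  simp only [Mop, mopCoeff, Matrix.add_apply, one_apply, submatrix_apply, id, diagonal_apply,
    Fin.ext_iff, Fin.val_rev]
  have := i.isLt
  split_ifs <;> first | omega | simp

theorem Mop_isHermitian (m : ℕ) (t : ℕ → ℝ) (Z : ℂ) : (Mop m t Z).IsHermitian := by
  ext i j
  simp only [conjTranspose_apply, Mop, Fin.ext_iff]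
  split_ifs <;> first | omega | simp

theorem Hop_conjTranspose (m : ℕ) (t : ℕ → ℝ) (z : ℕ → ℂ) :
    (Hop m t z)ᴴ = Hop m t (starRingEnd ℂ ∘ z) := by
  ext i j
  simp only [conjTranspose_apply, Hop, Function.comp_apply]
  split_ifs <;> first | omega | simp_all

theorem Hop_sub_Hop (m : ℕ) (t : ℕ → ℝ) (z w : ℕ → ℂ) :
    Hop m t z - Hop m t w = diagonal (fun i : Fin (2*m) => z (i + 1) - w (i + 1)) := by
  ext i j
  simp only [Matrix.sub_apply, Hop, diagonal_apply, Fin.ext_iff]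
  split_ifs <;> simp

theorem Hop_submatrix_rev (m : ℕ) (t : ℕ → ℝ) (z : ℕ → ℂ)
    (htsym : ∀ j, 1 ≤ j → j ≤ 2*m - 1 → t j = t (2*m - j))
    (hzsym : ∀ j, 1 ≤ j → j ≤ 2*m → z (2*m + 1 - j) = (starRingEnd ℂ) (z j)) :
    (Hop m t z).submatrix Fin.rev Fin.rev = Hop m t (starRingEnd ℂ ∘ z) := by
  ext i j
  have hi := i.isLt
  have hj := j.isLt
  have hz : ∀ k, k < 2*m → z (2*m - (k + 1) + 1) = (starRingEnd ℂ) (z (k + 1)) := by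
    intro k hk
    rw [← hzsym (k + 1) (by omega) (by omega)]
    congr 1
    omega
  have ht : ∀ k, k + 1 < 2*m → t (2*m - (k + 1)) = t (k + 1) := fun k hk =>
    (htsym (k + 1) (by omega) (by omega)).symm
  simp only [submatrix_apply, Hop, Fin.val_rev, Function.comp_apply]
  split_ifs <;> first | rfl | omega | skip
  · exact hz i hi
  · rw [show 2*m - ((i : ℕ) + 1) + 1 = 2*m - ((j : ℕ) + 1) by omega, ht j (by omega)]
  · rw [show 2*m - ((j : ℕ) + 1) + 1 = 2*m - ((i : ℕ) + 1) by omega, ht i (by omega)]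

noncomputable def gainLoss (m : ℕ) (γ : ℝ) (i : Fin (2*m)) : ℂ :=
  if (i : ℕ) + 1 = m then -(2 * γ * I) else if (i : ℕ) = m then 2 * γ * I else 0

theorem Hop_conj_sub_Hop (m : ℕ) (t : ℕ → ℝ) (z : ℕ → ℂ)
    (hzreal : ∀ j, 1 ≤ j → j ≤ 2*m → j ≠ m → j ≠ m + 1 → (z j).im = 0)
    (hzsym : ∀ j, 1 ≤ j → j ≤ 2*m → z (2*m + 1 - j) = (starRingEnd ℂ) (z j)) :
    Hop m t (starRingEnd ℂ ∘ z) - Hop m t z = diagonal (gainLoss m (z m).im) := by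
  rw [Hop_sub_Hop]
  congr 1
  funext i
  have hi := i.isLt
  simp only [Function.comp_apply, gainLoss]
  split_ifs with h1 h2
  · rw [h1, ← neg_sub, sub_conj]
    push_cast
    ring
  · have hzm := hzsym m (by omega) (by omega)
    rw [show 2*m + 1 - m = m + 1 by omega] at hzm
    rw [h2, hzm, conj_conj, sub_conj]
    push_cast
    ring
  · rw [conj_eq_iff_im.mpr (hzreal _ (by omega) (by omega) h1 (by omega)), sub_self]

theorem commutator_Hop_mul_permMatrix_revPerm (m : ℕ) (t : ℕ → ℝ) (w : ℕ → ℂ) (Z : ℂ)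
    (htm : t m ≠ 0) :
    (diagonal (mopCoeff m t Z) * Hop m t w - Hop m t w * diagonal (mopCoeff m t Z)) *
      Fin.revPerm.permMatrix ℂ = diagonal (gainLoss m Z.im) := by
  rw [mul_permMatrix_revPerm]
  ext i j
  rw [submatrix_apply, id, diagonal_mul_sub_mul_diagonal_apply]
  have hi := i.isLt
  have hj := j.isLt
  simp only [Hop, mopCoeff, diagonal_apply, gainLoss, Fin.ext_iff, Fin.val_rev]
  have htm' : (t m : ℂ) ≠ 0 := Complex.ofReal_ne_zero.mpr htm
  split_ifs <;> first | omega | simp only [sub_self, zero_mul, mul_zero] | skip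
  · rw [show (i : ℕ) + 1 = m by omega, ← sub_div, div_mul_cancel₀ _ htm', ← neg_sub,
      sub_conj]
    push_cast
    ring
  · rw [show 2*m - ((j : ℕ) + 1) + 1 = m by omega, ← sub_div, div_mul_cancel₀ _ htm',
      sub_conj]
    push_cast
    ring

theorem stmt0 (m : ℕ) (t : ℕ → ℝ) (z : ℕ → ℂ)
    (htsym : ∀ j, 1 ≤ j → j ≤ 2*m - 1 → t j = t (2*m - j))
    (htm : 0 < t m)
    (hzreal : ∀ j, 1 ≤ j → j ≤ 2*m → j ≠ m → j ≠ m + 1 → (z j).im = 0)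
    (hzsym : ∀ j, 1 ≤ j → j ≤ 2*m → z (2*m + 1 - j) = (starRingEnd ℂ) (z j))
    (Z : ℂ) (hZ : Z.im = (z m).im) :
    (Mop m t Z).IsHermitian ∧
      Mop m t Z * Hop m t z = (Hop m t z)ᴴ * Mop m t Z := by
  refine ⟨Mop_isHermitian m t Z, ?_⟩
  have hpersym : Fin.revPerm.permMatrix ℂ * Hop m t z =
      (Hop m t z)ᴴ * Fin.revPerm.permMatrix ℂ := by
    rw [permMatrix_revPerm_mul, mul_permMatrix_revPerm, Hop_conjTranspose,
      ← Hop_submatrix_rev m t z htsym hzsym, submatrix_submatrix, Fin.rev_involutive.comp_self]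
    rfl
  have hcomm : (diagonal (mopCoeff m t Z) * (Hop m t z)ᴴ -
      (Hop m t z)ᴴ * diagonal (mopCoeff m t Z)) * Fin.revPerm.permMatrix ℂ =
      (Hop m t z)ᴴ - Hop m t z := by
    rw [Hop_conjTranspose, commutator_Hop_mul_permMatrix_revPerm m t _ Z htm.ne',
      Hop_conj_sub_Hop m t z hzreal hzsym, hZ]
  rw [Mop_eq_one_add]
  exact one_add_mul_mul_eq_mul_one_add_mul hpersym hcomm
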